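/- arXiv:2410.11750 — 2 statements merged into one kernel-verified Lean document; each statement's English description precedes it below -/
import Mathlib

section
/- The absolute value function |·| : ℝ → ℝ is twice epi-differentiable at every x ∈ ℝ for every y ∈ ∂|·|(x), and its second-order epi-derivative is the indicator function ι_{K_{x,y}} of the closed convex set K_{x,y} ⊆ ℝ defined by: K_{x,y} = ℝ if x ≠ 0; K_{x,y} = ℝ₋ if x = 0 and y = −1; K_{x,y} = ℝ₊ if x = 0 and y = 1; K_{x,y} = {0} if x = 0 and y ∈ (−1, 1). In particular, the second-order difference quotient functions Δ_t²|·|(x|y)(z) := (|x + t z| − |x| − t y z)/t² Mosco epi-converge (here: epi-converge in ℝ) to ι_{K_{x,y}} as t → 0⁺. -/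
open Filter Topology
open scoped Classical

/-- The set `K_{x,y}` from the second-order epi-derivative of the absolute value. -/
noncomputable def Kxy (x y : ℝ) : Set ℝ :=
  if x ≠ 0 then Set.univ
  else if y = -1 then Set.Iic 0
  else if y = 1 then Set.Ici 0
  else {0}

/-- Indicator function (in the convex-analysis sense) of a set, with values in `EReal`. -/
noncomputable def indicatorE (K : Set ℝ) (z : ℝ) : EReal :=
  if z ∈ K then 0 else ⊤

/-- Second-order difference quotient of the absolute value at `x` for `y`. -/
noncomputable def absQuot (x y t z : ℝ) : ℝ :=
  (|x + t * z| - |x| - t * y * z) / t ^ 2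

lemma absQuot_nonneg (x y t z : ℝ) (hy : |y| ≤ 1) (hyx : y * x = |x|) :
    0 ≤ absQuot x y t z := by
  have h1 : y * (x + t * z) ≤ |x + t * z| := by
    calc y * (x + t * z) ≤ |y * (x + t * z)| := le_abs_self _
    _ = |y| * |x + t * z| := abs_mul _ _
    _ ≤ 1 * |x + t * z| := by gcongr
    _ = |x + t * z| := one_mul _
  have h2 : |x| + t * y * z ≤ |x + t * z| := by nlinarith [h1]
  exact div_nonneg (by linarith) (sq_nonneg t)

lemma absQuot_zero (y t z : ℝ) (ht : 0 < t) :
    absQuot 0 y t z = (|z| - y * z) / t := by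
  unfold absQuot
  rw [zero_add, abs_mul, abs_of_pos ht]
  field_simp
  ring

/-- The absolute value is twice epi-differentiable at any `x` for any `y ∈ ∂|·|(x)`, with
second-order epi-derivative the indicator of `K_{x,y}`: the second-order difference quotients
epi-converge to `ι_{K_{x,y}}` as `t → 0⁺` (liminf inequality along all converging sequences,
and existence of recovery sequences). -/
theorem stmt_3 (x y : ℝ) (hy : |y| ≤ 1 ∧ y * x = |x|) :
    (∀ (z : ℝ) (tn zn : ℕ → ℝ), (∀ n, 0 < tn n) → Tendsto tn atTop (𝓝 0) →
      Tendsto zn atTop (𝓝 z) →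
      indicatorE (Kxy x y) z ≤
        Filter.liminf (fun n => ((absQuot x y (tn n) (zn n) : ℝ) : EReal)) atTop) ∧
    (∀ (z : ℝ) (tn : ℕ → ℝ), (∀ n, 0 < tn n) → Tendsto tn atTop (𝓝 0) →
      ∃ zn : ℕ → ℝ, Tendsto zn atTop (𝓝 z) ∧
        Filter.limsup (fun n => ((absQuot x y (tn n) (zn n) : ℝ) : EReal)) atTop ≤
          indicatorE (Kxy x y) z) := by
  obtain ⟨hy1, hyx⟩ := hy
  constructor
  · intro z tn zn htn htn0 hzn
    by_cases hz : z ∈ Kxy x y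
    · rw [indicatorE, if_pos hz]
      refine Filter.le_liminf_of_le (by isBoundedDefault) ?_
      refine Filter.Eventually.of_forall fun n => ?_
      exact_mod_cast absQuot_nonneg x y (tn n) (zn n) hy1 hyx
    · rw [indicatorE, if_neg hz]
      -- x must be 0
      have hx0 : x = 0 := by
        by_contra hx
        exact hz (by simp [Kxy, hx])
      subst hx0
      -- positive constant c = |z| - y z
      have hc : 0 < |z| - y * z := by
        unfold Kxy at hz
        simp only [ne_eq, not_true_eq_false, if_false] at hz
        by_cases hym : y = -1
        · simp [hym] at hz
          have : 0 < z := by simpa using hz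
          rw [abs_of_pos this]; nlinarith
        · by_cases hyp : y = 1
          · norm_num [hyp] at hz
            have : z < 0 := hz
            rw [abs_of_neg this]; nlinarith
          · simp [hym, hyp] at hz
            have hz0 : z ≠ 0 := hz
            have hylt : |y| < 1 := lt_of_le_of_ne hy1 (by
              intro h
              rcases abs_eq (by norm_num : (0:ℝ) ≤ 1) |>.mp h with h' | h'
              exacts [hyp h', hym h'])
            have : y * z ≤ |y| * |z| := by
              calc y * z ≤ |y * z| := le_abs_self _
              _ = |y| * |z| := abs_mul _ _
            have hzpos : 0 < |z| := abs_pos.mpr hz0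
            nlinarith
      -- the sequence tends to ⊤
      have hnum : Tendsto (fun n => |zn n| - y * zn n) atTop (𝓝 (|z| - y * z)) :=
        (hzn.abs).sub (hzn.const_mul y)
      have hinv : Tendsto (fun n => (tn n)⁻¹) atTop atTop := by
        apply tendsto_inv_nhdsGT_zero.comp
        rw [tendsto_nhdsWithin_iff]
        exact ⟨htn0, Filter.Eventually.of_forall fun n => htn n⟩
      have hdiv : Tendsto (fun n => (|zn n| - y * zn n) / tn n) atTop atTop := by
        simp only [div_eq_mul_inv]
        exact Filter.Tendsto.pos_mul_atTop hc hnum hinv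
      have htop : Tendsto (fun n => ((absQuot 0 y (tn n) (zn n) : ℝ) : EReal)) atTop (𝓝 ⊤) := by
        rw [EReal.tendsto_nhds_top_iff_real]
        intro M
        filter_upwards [hdiv.eventually_gt_atTop M] with n hn
        rw [absQuot_zero y (tn n) (zn n) (htn n)]
        exact_mod_cast hn
      rw [htop.liminf_eq]
  · intro z tn htn htn0
    refine ⟨fun _ => z, tendsto_const_nhds, ?_⟩
    by_cases hz : z ∈ Kxy x y
    · rw [indicatorE, if_pos hz]
      refine Filter.limsup_le_of_le (by isBoundedDefault) ?_
      by_cases hx : x = 0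
      · subst hx
        have hzy : |z| = y * z := by
          unfold Kxy at hz
          simp only [ne_eq, not_true_eq_false, if_false] at hz
          by_cases hym : y = -1
          · simp only [hym, if_true, Set.mem_Iic] at hz
            rw [hym, abs_of_nonpos hz]; ring
          · by_cases hyp : y = 1
            · norm_num [hyp] at hz
              rw [hyp, abs_of_nonneg hz, one_mul]
            · simp [hym, hyp] at hz
              simp [hz]
        refine Filter.Eventually.of_forall fun n => ?_
        rw [absQuot_zero y (tn n) z (htn n), hzy, sub_self, zero_div]
        exact le_refl _
      · -- x ≠ 0 : eventually the quotient is 0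
        have hy' : y = |x| / x := by field_simp [hx] at hyx ⊢; linarith
        have habs : ∀ n, tn n * |z| < |x| → absQuot x y (tn n) z = 0 := by
          intro n hn
          have ht := htn n
          have key : |x + tn n * z| = |x| + tn n * y * z := by
            rcases lt_or_gt_of_ne hx with hneg | hpos
            · have hyv : y = -1 := by rw [hy', abs_of_neg hneg]; field_simp
              have h1 : tn n * z ≤ tn n * |z| := by
                have := le_abs_self z; nlinarith
              have : x + tn n * z ≤ 0 := by
                rw [abs_of_neg hneg] at hn; linarith
              rw [abs_of_nonpos this, abs_of_neg hneg, hyv]; ring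
            · have hyv : y = 1 := by rw [hy', abs_of_pos hpos]; field_simp
              have h1 : -(tn n * |z|) ≤ tn n * z := by
                have := neg_abs_le z; nlinarith
              have : 0 ≤ x + tn n * z := by
                rw [abs_of_pos hpos] at hn; linarith
              rw [abs_of_nonneg this, abs_of_pos hpos, hyv]; ring
          unfold absQuot
          rw [key]; ring_nf
        have hev : ∀ᶠ n in atTop, tn n * |z| < |x| := by
          have : Tendsto (fun n => tn n * |z|) atTop (𝓝 0) := by
            simpa using htn0.mul_const |z|
          have hxpos : (0:ℝ) < |x| := abs_pos.mpr hx
          exact this.eventually_lt_const hxpos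
        filter_upwards [hev] with n hn
        rw [habs n hn]
        exact le_refl _
    · rw [indicatorE, if_neg hz]
      exact le_top
end

section
/- Let Ψ(t, x) := |x − t²| for (t, x) ∈ ℝ₊ × ℝ. Then Ψ is twice epi-differentiable at every x ∈ ℝ for every y ∈ ∂Ψ(0,·)(x) = ∂|·|(x), and its second-order epi-derivative is: ι_ℝ if x ≠ 0; ι_{ℝ₋} if x = 0 and y = −1; ι_{ℝ₊} − 2 if x = 0 and y = 1; ι_{{0}} − y − 1 if x = 0 and y ∈ (−1, 1). -/
open Filter Topology
open scoped Classical

/-- The second-order epi-derivative of `Ψ(t,x) = |x - t²|` at `x` for `y ∈ ∂|·|(x)`. -/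
noncomputable def D4 (x y : ℝ) : ℝ → EReal :=
  if x ≠ 0 then fun _ => (0 : EReal)
  else if y = -1 then fun z => if z ≤ 0 then (0 : EReal) else ⊤
  else if y = 1 then fun z => if 0 ≤ z then ((-2 : ℝ) : EReal) else ⊤
  else fun z => if z = 0 then ((-y - 1 : ℝ) : EReal) else ⊤

/-- Second-order difference quotient of `Ψ(t,x) = |x - t²|` at `x` for `y`. -/
noncomputable def psiQuot (x y t z : ℝ) : ℝ :=
  (|x + t * z - t ^ 2| - |x - t ^ 2| - t * y * z) / t ^ 2

private lemma le_liminf_coe {f : ℕ → ℝ} {c : ℝ} (h : ∀ᶠ n in atTop, c ≤ f n) :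
    (c : EReal) ≤ Filter.liminf (fun n => ((f n : ℝ) : EReal)) atTop :=
  Filter.le_liminf_of_le (by isBoundedDefault) (h.mono fun n hn => by exact_mod_cast hn)

private lemma limsup_coe_le {f : ℕ → ℝ} {c : ℝ} (h : ∀ᶠ n in atTop, f n ≤ c) :
    Filter.limsup (fun n => ((f n : ℝ) : EReal)) atTop ≤ (c : EReal) :=
  Filter.limsup_le_of_le (by isBoundedDefault) (h.mono fun n hn => by exact_mod_cast hn)

private lemma top_le_liminf_of {f : ℕ → ℝ}
    (h : ∀ c : ℝ, ∀ᶠ n in atTop, c ≤ f n) :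
    (⊤ : EReal) ≤ Filter.liminf (fun n => ((f n : ℝ) : EReal)) atTop := by
  refine top_le_iff.2 ((EReal.eq_top_iff_forall_lt _).2 fun c => ?_)
  calc ((c : ℝ) : EReal) < ((c + 1 : ℝ) : EReal) := by exact_mod_cast (lt_add_one c)
    _ ≤ _ := le_liminf_coe (h (c + 1))

private lemma ev_ge_of_mul {tn q : ℕ → ℝ} (htpos : ∀ n, 0 < tn n)
    (ht : Tendsto tn atTop (𝓝 0)) {K : ℝ} (hK : 0 < K)
    (h : ∀ᶠ n in atTop, K ≤ q n * tn n) (c : ℝ) : ∀ᶠ n in atTop, c ≤ q n := by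
  have hev : ∀ᶠ n in atTop, tn n < K / (|c| + 1) :=
    ht.eventually_lt_const (by positivity)
  filter_upwards [hev, h] with n h1 h2
  have h1' : tn n * (|c| + 1) < K := (lt_div_iff₀ (by positivity)).1 h1
  have h3 : c * tn n ≤ |c| * tn n :=
    mul_le_mul_of_nonneg_right (le_abs_self c) (htpos n).le
  nlinarith [htpos n]

private lemma psiQuot_zero (y t z : ℝ) (ht : 0 < t) :
    psiQuot 0 y t z = (|z - t| - t - y * z) / t := by
  unfold psiQuot
  have h1 : (0 : ℝ) + t * z - t ^ 2 = t * (z - t) := by ring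
  have h2 : (0 : ℝ) - t ^ 2 = -(t ^ 2) := by ring
  rw [h1, h2, abs_neg, abs_mul, abs_of_pos ht, abs_of_pos (by positivity : (0:ℝ) < t ^ 2)]
  field_simp

private lemma psiQuot_ne {x y t z : ℝ} (hx : x ≠ 0) (hyx : y * x = |x|) (ht : 0 < t)
    (h1 : |t * z - t ^ 2| < |x|) (h2 : t ^ 2 < |x|) : psiQuot x y t z = 0 := by
  rcases hx.lt_or_gt with hneg | hpos
  · have hax : |x| = -x := abs_of_neg hneg
    have hy : y = -1 := by
      rw [hax] at hyx
      have h0 : (y + 1) * x = 0 := by linarith [hyx]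
      rcases mul_eq_zero.1 h0 with h' | h'
      · linarith
      · exact absurd h' (ne_of_lt hneg)
    rw [hax] at h1 h2
    obtain ⟨h1a, h1b⟩ := abs_lt.1 h1
    have hA : x + t * z - t ^ 2 < 0 := by linarith
    have hB : x - t ^ 2 < 0 := by nlinarith [sq_nonneg t]
    unfold psiQuot
    rw [abs_of_neg hA, abs_of_neg hB, hy]
    have h0 : -(x + t * z - t ^ 2) - -(x - t ^ 2) - t * (-1) * z = 0 := by ring
    rw [h0, zero_div]
  · have hax : |x| = x := abs_of_pos hpos
    have hy : y = 1 := by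
      rw [hax] at hyx
      have h0 : (y - 1) * x = 0 := by linarith [hyx]
      rcases mul_eq_zero.1 h0 with h' | h'
      · linarith
      · exact absurd h' (ne_of_gt hpos)
    rw [hax] at h1 h2
    obtain ⟨h1a, h1b⟩ := abs_lt.1 h1
    have hA : 0 < x + t * z - t ^ 2 := by linarith
    have hB : 0 < x - t ^ 2 := by linarith
    unfold psiQuot
    rw [abs_of_pos hA, abs_of_pos hB, hy]
    have h0 : (x + t * z - t ^ 2) - (x - t ^ 2) - t * 1 * z = 0 := by ring
    rw [h0, zero_div]

private lemma ev_psi_ne {x y : ℝ} (hx : x ≠ 0) (hyx : y * x = |x|)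
    {tn zn : ℕ → ℝ} (htpos : ∀ n, 0 < tn n) (ht : Tendsto tn atTop (𝓝 0))
    {z : ℝ} (hz : Tendsto zn atTop (𝓝 z)) :
    ∀ᶠ n in atTop, psiQuot x y (tn n) (zn n) = 0 := by
  have hx' : 0 < |x| := abs_pos.2 hx
  have h1 : Tendsto (fun n => |tn n * zn n - tn n ^ 2|) atTop (𝓝 0) := by
    have := ((ht.mul hz).sub (ht.pow 2)).abs
    simpa using this
  have h2 : Tendsto (fun n => tn n ^ 2) atTop (𝓝 0) := by
    have := ht.pow 2
    simpa using this
  filter_upwards [h1.eventually_lt_const hx', h2.eventually_lt_const hx'] with n hn1 hn2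
  exact psiQuot_ne hx hyx (htpos n) hn1 hn2

/-- `Ψ(t, x) := |x - t²|` is twice epi-differentiable at every `x` for every `y ∈ ∂Ψ(0,·)(x)
= ∂|·|(x)`, with second-order epi-derivative `D4 x y`: the second-order difference quotients
epi-converge to `D4 x y` as `t → 0⁺` (liminf inequality along all converging sequences, and
existence of recovery sequences). -/
theorem stmt_4 (x y : ℝ) (hy : |y| ≤ 1 ∧ y * x = |x|) :
    (∀ (z : ℝ) (tn zn : ℕ → ℝ), (∀ n, 0 < tn n) → Tendsto tn atTop (𝓝 0) →
      Tendsto zn atTop (𝓝 z) →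
      D4 x y z ≤ Filter.liminf (fun n => ((psiQuot x y (tn n) (zn n) : ℝ) : EReal)) atTop) ∧
    (∀ (z : ℝ) (tn : ℕ → ℝ), (∀ n, 0 < tn n) → Tendsto tn atTop (𝓝 0) →
      ∃ zn : ℕ → ℝ, Tendsto zn atTop (𝓝 z) ∧
        Filter.limsup (fun n => ((psiQuot x y (tn n) (zn n) : ℝ) : EReal)) atTop ≤
          D4 x y z) := by
  obtain ⟨hy1, hy2⟩ := hy
  constructor
  · -- liminf inequality
    intro z tn zn htpos ht hz
    by_cases hx : x = 0
    · subst hx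
      have hq : ∀ n, psiQuot 0 y (tn n) (zn n)
          = (|zn n - tn n| - tn n - y * zn n) / tn n := fun n =>
        psiQuot_zero y (tn n) (zn n) (htpos n)
      by_cases hym : y = -1
      · subst hym
        rcases le_or_gt z 0 with hz0 | hz0
        · have hD : D4 0 (-1) z = 0 := by simp [D4, hz0]
          rw [hD]
          have : ((0 : ℝ) : EReal) ≤ _ := le_liminf_coe (f := fun n => psiQuot 0 (-1) (tn n) (zn n))
            (Filter.Eventually.of_forall fun n => by
              show (0:ℝ) ≤ psiQuot 0 (-1) (tn n) (zn n)
              rw [hq n]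
              apply div_nonneg _ (htpos n).le
              have := neg_abs_le (zn n - tn n)
              linarith)
          simpa using this
        · have hD : D4 0 (-1) z = ⊤ := by simp [D4, not_le.2 hz0]
          rw [hD]
          apply top_le_liminf_of
          intro c
          apply ev_ge_of_mul htpos ht (show (0:ℝ) < z / 2 by linarith)
          filter_upwards [hz.eventually_const_lt (show z / 2 < z by linarith),
            ht.eventually_lt_const (show (0:ℝ) < z / 8 by linarith)] with n hn1 hn2
          rw [hq n, div_mul_cancel₀ _ (htpos n).ne']
          have := le_abs_self (zn n - tn n)
          nlinarith
      · by_cases hyp : y = 1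
        · subst hyp
          rcases le_or_gt 0 z with hz0 | hz0
          · have hD : D4 0 1 z = ((-2 : ℝ) : EReal) := by norm_num [D4, hz0]
            rw [hD]
            apply le_liminf_coe
            refine Filter.Eventually.of_forall fun n => ?_
            rw [hq n, le_div_iff₀ (htpos n)]
            have := le_abs_self (zn n - tn n)
            nlinarith
          · have hD : D4 0 1 z = ⊤ := by norm_num [D4, not_le.2 hz0]
            rw [hD]
            apply top_le_liminf_of
            intro c
            apply ev_ge_of_mul htpos ht (show (0:ℝ) < -z / 2 by linarith)
            filter_upwards [hz.eventually_lt_const (show z < z / 2 by linarith)] with n hn1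
            rw [hq n, div_mul_cancel₀ _ (htpos n).ne']
            have := neg_abs_le (zn n - tn n)
            nlinarith [htpos n]
        · -- -1 < y < 1
          have hyl : -1 < y := lt_of_le_of_ne (abs_le.1 hy1).1 (Ne.symm hym)
          have hyr : y < 1 := lt_of_le_of_ne (abs_le.1 hy1).2 hyp
          by_cases hz0 : z = 0
          · subst hz0
            have hD : D4 0 y 0 = ((-y - 1 : ℝ) : EReal) := by simp [D4, hym, hyp]
            rw [hD]
            apply le_liminf_coe
            refine Filter.Eventually.of_forall fun n => ?_
            rw [hq n, le_div_iff₀ (htpos n)]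
            rcases le_total (zn n) (tn n) with h | h
            · have hp : (1 + y) * zn n ≤ (1 + y) * tn n :=
                mul_le_mul_of_nonneg_left h (by linarith)
              have := neg_abs_le (zn n - tn n)
              nlinarith
            · have hp : (1 - y) * tn n ≤ (1 - y) * zn n :=
                mul_le_mul_of_nonneg_left h (by linarith)
              have := le_abs_self (zn n - tn n)
              nlinarith
          · have hD : D4 0 y z = ⊤ := by simp [D4, hym, hyp, hz0]
            rw [hD]
            apply top_le_liminf_of
            intro c
            rcases lt_or_gt_of_ne hz0 with hzn | hzp
            · -- z < 0
              apply ev_ge_of_mul htpos ht (show (0:ℝ) < (1 + y) * (-z) / 2 by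
                have : 0 < -z := by linarith
                have : 0 < 1 + y := by linarith
                positivity)
              filter_upwards [hz.eventually_lt_const (show z < z / 2 by linarith)] with n hn1
              rw [hq n, div_mul_cancel₀ _ (htpos n).ne']
              have h1 := neg_abs_le (zn n - tn n)
              have hp : (1 + y) * zn n ≤ (1 + y) * (z / 2) :=
                mul_le_mul_of_nonneg_left hn1.le (by linarith)
              nlinarith
            · -- z > 0
              apply ev_ge_of_mul htpos ht (show (0:ℝ) < (1 - y) * z / 4 by
                have : 0 < 1 - y := by linarith
                positivity)
              filter_upwards [hz.eventually_const_lt (show z / 2 < z by linarith),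
                ht.eventually_lt_const (show (0:ℝ) < (1 - y) * z / 8 by
                  have : 0 < 1 - y := by linarith
                  positivity)] with n hn1 hn2
              rw [hq n, div_mul_cancel₀ _ (htpos n).ne']
              have h1 := le_abs_self (zn n - tn n)
              have hp : (1 - y) * (z / 2) ≤ (1 - y) * zn n :=
                mul_le_mul_of_nonneg_left hn1.le (by linarith)
              nlinarith
    · -- x ≠ 0
      have hD : D4 x y z = 0 := by simp [D4, hx]
      rw [hD]
      have hev := ev_psi_ne hx hy2 htpos ht hz
      have : ((0 : ℝ) : EReal) ≤ _ :=
        le_liminf_coe (f := fun n => psiQuot x y (tn n) (zn n))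
          (hev.mono fun n hn => hn.symm.le)
      simpa using this
  · -- recovery sequences
    intro z tn htpos ht
    by_cases hx : x = 0
    · subst hx
      by_cases hym : y = -1
      · subst hym
        rcases le_or_gt z 0 with hz0 | hz0
        · refine ⟨fun _ => z, tendsto_const_nhds, ?_⟩
          have hD : D4 0 (-1) z = 0 := by simp [D4, hz0]
          rw [hD]
          have : Filter.limsup _ atTop ≤ ((0 : ℝ) : EReal) :=
            limsup_coe_le (f := fun n => psiQuot 0 (-1) (tn n) z)
              (Filter.Eventually.of_forall fun n => by
                show psiQuot 0 (-1) (tn n) z ≤ (0:ℝ)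
                rw [psiQuot_zero _ _ _ (htpos n),
                  abs_of_nonpos (by linarith [htpos n] : z - tn n ≤ 0)]
                have h0 : -(z - tn n) - tn n - (-1) * z = 0 := by ring
                rw [h0, zero_div])
          simpa using this
        · refine ⟨fun _ => z, tendsto_const_nhds, ?_⟩
          have hD : D4 0 (-1) z = ⊤ := by simp [D4, not_le.2 hz0]
          rw [hD]; exact le_top
      · by_cases hyp : y = 1
        · subst hyp
          rcases le_or_gt 0 z with hz0 | hz0
          · refine ⟨fun n => max z (tn n), ?_, ?_⟩
            · have := (tendsto_const_nhds (x := z)).max ht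
              simpa [max_eq_left hz0] using this
            · have hD : D4 0 1 z = ((-2 : ℝ) : EReal) := by norm_num [D4, hz0]
              rw [hD]
              apply limsup_coe_le
              refine Filter.Eventually.of_forall fun n => ?_
              rw [psiQuot_zero _ _ _ (htpos n),
                abs_of_nonneg (by linarith [le_max_right z (tn n)] :
                  (0:ℝ) ≤ max z (tn n) - tn n)]
              have h0 : max z (tn n) - tn n - tn n - 1 * max z (tn n) = -2 * tn n := by ring
              rw [h0, mul_div_assoc, div_self (htpos n).ne', mul_one]
          · refine ⟨fun _ => z, tendsto_const_nhds, ?_⟩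
            have hD : D4 0 1 z = ⊤ := by norm_num [D4, not_le.2 hz0]
            rw [hD]; exact le_top
        · by_cases hz0 : z = 0
          · subst hz0
            refine ⟨tn, ht, ?_⟩
            have hD : D4 0 y 0 = ((-y - 1 : ℝ) : EReal) := by simp [D4, hym, hyp]
            rw [hD]
            apply limsup_coe_le
            refine Filter.Eventually.of_forall fun n => ?_
            rw [psiQuot_zero _ _ _ (htpos n)]
            have h0 : |tn n - tn n| - tn n - y * tn n = (-y - 1) * tn n := by
              simp; ring
            rw [h0, mul_div_assoc, div_self (htpos n).ne', mul_one]
          · refine ⟨fun _ => z, tendsto_const_nhds, ?_⟩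
            have hD : D4 0 y z = ⊤ := by simp [D4, hym, hyp, hz0]
            rw [hD]; exact le_top
    · refine ⟨fun _ => z, tendsto_const_nhds, ?_⟩
      have hD : D4 x y z = 0 := by simp [D4, hx]
      rw [hD]
      have hev := ev_psi_ne hx hy2 htpos ht (tendsto_const_nhds (x := z))
      have : Filter.limsup _ atTop ≤ ((0 : ℝ) : EReal) :=
        limsup_coe_le (f := fun n => psiQuot x y (tn n) z) (hev.mono fun n hn => hn.le)
      simpa using this
end
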